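/- Suppose U : ℝ → ℂ^n, with block decomposition U = (u1,u2), solves the 1-D eigenvalue equation λĀ⁰U + (Ā¹U)' = (B̄¹¹U')' where B̄¹¹ = [[0,0],[0,b̄¹¹]] with b̄¹¹ invertible, Ā¹₁₁ invertible, and all coefficient matrices are smooth functions of x. Define f := B̄¹¹U' - Ā¹U. Then W := (f, u2) solves a first-order linear ODE W' = 𝐀_f(x;λ)W whose coefficient matrix (with 𝐚 := (Ā¹₁₁)⁻¹) is [[-λĀ⁰₁₁𝐚, 0, λ(Ā⁰₁₂ - Ā⁰₁₁𝐚Ā¹₁₂)], [-λĀ⁰₂₁𝐚, 0, λ(Ā⁰₂₂ - Ā⁰₂₁𝐚Ā¹₁₂)], [-(b̄¹¹)⁻¹Ā¹₂₁𝐚, (b̄¹¹)⁻¹, (b̄¹¹)⁻¹(Ā¹₂₂ - Ā¹₂₁𝐚Ā¹₁₂)]]. -/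

import Mathlib

open Matrix

/-- The 1-D flux coefficient matrix `𝐀_f(x;λ)` (eq. (3.14)), built from the
blocks of `Ā⁰`, `Ā¹` and `b̄¹¹`, with `𝐚 := (Ā¹₁₁)⁻¹`. -/
noncomputable def fluxMatrix {r m : ℕ}
    (A0 A1 : Matrix (Fin r ⊕ Fin m) (Fin r ⊕ Fin m) ℂ)
    (b11 : Matrix (Fin m) (Fin m) ℂ) (lam : ℂ) :
    Matrix ((Fin r ⊕ Fin m) ⊕ Fin m) ((Fin r ⊕ Fin m) ⊕ Fin m) ℂ :=
  let a := (A1.toBlocks₁₁)⁻¹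
  Matrix.fromBlocks
    (Matrix.fromBlocks (-(lam • (A0.toBlocks₁₁ * a))) 0
      (-(lam • (A0.toBlocks₂₁ * a))) 0)
    (Matrix.fromRows (lam • (A0.toBlocks₁₂ - A0.toBlocks₁₁ * a * A1.toBlocks₁₂))
      (lam • (A0.toBlocks₂₂ - A0.toBlocks₂₁ * a * A1.toBlocks₁₂)))
    (Matrix.fromCols (-(b11⁻¹ * A1.toBlocks₂₁ * a)) b11⁻¹)
    (b11⁻¹ * (A1.toBlocks₂₂ - A1.toBlocks₂₁ * a * A1.toBlocks₁₂))

/-- If `U = (u1,u2)` solves the 1-D eigenvalue equation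
`λĀ⁰U + (Ā¹U)' = (B̄¹¹U')'` with `b̄¹¹` and `Ā¹₁₁` invertible, then the flux
phase variable `W = (f, u2)` with `f := B̄¹¹U' - Ā¹U` solves the first-order
system `W' = 𝐀_f(x;λ)W` with the explicit coefficient matrix `fluxMatrix`. -/
theorem stmt10 {r m : ℕ}
    (A0 A1 : ℝ → Matrix (Fin r ⊕ Fin m) (Fin r ⊕ Fin m) ℂ)
    (b11 : ℝ → Matrix (Fin m) (Fin m) ℂ)
    (hA0 : ∀ i j, ContDiff ℝ (⊤ : ℕ∞) fun x => A0 x i j)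
    (hA1 : ∀ i j, ContDiff ℝ (⊤ : ℕ∞) fun x => A1 x i j)
    (hb11 : ∀ i j, ContDiff ℝ (⊤ : ℕ∞) fun x => b11 x i j)
    (hbinv : ∀ x, IsUnit (b11 x)) (hA111 : ∀ x, IsUnit ((A1 x).toBlocks₁₁))
    (lam : ℂ) (U U' : ℝ → (Fin r ⊕ Fin m) → ℂ)
    (hU : ∀ x, HasDerivAt U (U' x) x)
    (f : ℝ → (Fin r ⊕ Fin m) → ℂ)
    (hfdef : ∀ x, f x = (Matrix.fromBlocks (0 : Matrix (Fin r) (Fin r) ℂ)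
      (0 : Matrix (Fin r) (Fin m) ℂ) (0 : Matrix (Fin m) (Fin r) ℂ)
      (b11 x)).mulVec (U' x) - (A1 x).mulVec (U x))
    (heig : ∀ x, HasDerivAt f (lam • (A0 x).mulVec (U x)) x) :
    ∀ x, HasDerivAt (fun y => Sum.elim (f y) (fun i => U y (Sum.inr i)))
      ((fluxMatrix (A0 x) (A1 x) (b11 x) lam).mulVec
        (Sum.elim (f x) (fun i => U x (Sum.inr i)))) x := by
  intro x
  have hdetA : IsUnit ((A1 x).toBlocks₁₁).det :=
    (Matrix.isUnit_iff_isUnit_det _).mp (hA111 x)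
  have hdetb : IsUnit (b11 x).det := (Matrix.isUnit_iff_isUnit_det _).mp (hbinv x)
  set a : Matrix (Fin r) (Fin r) ℂ := ((A1 x).toBlocks₁₁)⁻¹ with ha
  have haA : a * (A1 x).toBlocks₁₁ = 1 := Matrix.nonsing_inv_mul _ hdetA
  have hbb : (b11 x)⁻¹ * b11 x = 1 := Matrix.nonsing_inv_mul _ hdetb
  set u1 : Fin r → ℂ := fun j => U x (Sum.inl j) with hu1
  set u2 : Fin m → ℂ := fun k => U x (Sum.inr k) with hu2
  set v2 : Fin m → ℂ := fun k => U' x (Sum.inr k) with hv2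
  set A011 := (A0 x).toBlocks₁₁
  set A012 := (A0 x).toBlocks₁₂
  set A021 := (A0 x).toBlocks₂₁
  set A022 := (A0 x).toBlocks₂₂
  set A111 := (A1 x).toBlocks₁₁
  set A112 := (A1 x).toBlocks₁₂
  set A121 := (A1 x).toBlocks₂₁
  set A122 := (A1 x).toBlocks₂₂
  set f1 : Fin r → ℂ := -(A111 *ᵥ u1 + A112 *ᵥ u2) with hf1
  set f2 : Fin m → ℂ := (b11 x) *ᵥ v2 - (A121 *ᵥ u1 + A122 *ᵥ u2) with hf2
  have hUl : U x ∘ Sum.inl = u1 := rfl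
  have hUr : U x ∘ Sum.inr = u2 := rfl
  have hU'r : U' x ∘ Sum.inr = v2 := rfl
  have hfx : f x = Sum.elim f1 f2 := by
    rw [hfdef x]
    conv_lhs => rw [← Matrix.fromBlocks_toBlocks (A1 x)]
    rw [Matrix.fromBlocks_mulVec, Matrix.fromBlocks_mulVec]
    funext i
    cases i with
    | inl j =>
        simp [Matrix.toBlocks₁₁, Matrix.toBlocks₁₂, hUl, hUr, hf1, A111, A112]
    | inr k =>
        simp [hUl, hUr, hU'r, hf2, A121, A122]
  have hd : HasDerivAt (fun y => Sum.elim (f y) (fun i => U y (Sum.inr i)))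
      (Sum.elim (lam • (A0 x).mulVec (U x)) v2) x := by
    rw [hasDerivAt_pi]
    rintro (j | k)
    · exact hasDerivAt_pi.mp (heig x) j
    · exact hasDerivAt_pi.mp (hU x) (Sum.inr k)
  convert hd using 1
  show (fluxMatrix (A0 x) (A1 x) (b11 x) lam) *ᵥ (Sum.elim (f x) u2)
      = Sum.elim (lam • (A0 x) *ᵥ (U x)) v2
  have hUx : U x = Sum.elim u1 u2 := by funext i; cases i <;> rfl
  have key1 : (-(lam • (A011 * a))) *ᵥ f1 + (lam • (A012 - A011 * a * A112)) *ᵥ u2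
      = lam • (A011 *ᵥ u1 + A012 *ᵥ u2) := by
    rw [hf1]
    simp only [Matrix.neg_mulVec, Matrix.mulVec_neg, neg_neg, Matrix.mulVec_add,
      Matrix.smul_mulVec, Matrix.mulVec_mulVec, Matrix.sub_mulVec,
      Matrix.neg_mul, Matrix.mul_neg, Matrix.smul_mul, Matrix.mul_smul, smul_mul_assoc, Matrix.mul_assoc, haA, Matrix.mul_one, mul_one, smul_add, smul_sub, smul_smul,
      neg_smul, one_smul, neg_neg]
    abel
  have key2 : (-(lam • (A021 * a))) *ᵥ f1 + (lam • (A022 - A021 * a * A112)) *ᵥ u2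
      = lam • (A021 *ᵥ u1 + A022 *ᵥ u2) := by
    rw [hf1]
    simp only [Matrix.neg_mulVec, Matrix.mulVec_neg, neg_neg, Matrix.mulVec_add,
      Matrix.smul_mulVec, Matrix.mulVec_mulVec, Matrix.sub_mulVec,
      Matrix.neg_mul, Matrix.mul_neg, Matrix.smul_mul, Matrix.mul_smul, smul_mul_assoc, Matrix.mul_assoc, haA, Matrix.mul_one, mul_one, smul_add, smul_sub, smul_smul,
      neg_smul, one_smul, neg_neg]
    abel
  have key3 : (-(((b11 x)⁻¹ * A121) * a)) *ᵥ f1 + (b11 x)⁻¹ *ᵥ f2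
      + ((b11 x)⁻¹ * (A122 - A121 * a * A112)) *ᵥ u2 = v2 := by
    rw [hf1, hf2]
    simp only [Matrix.neg_mulVec, Matrix.mulVec_neg, neg_neg, Matrix.mulVec_add,
      Matrix.mulVec_sub, Matrix.mulVec_mulVec, Matrix.sub_mulVec, Matrix.mul_sub,
      Matrix.neg_mul, Matrix.mul_neg, Matrix.smul_mul, Matrix.mul_smul, smul_mul_assoc, Matrix.mul_assoc, haA, hbb, Matrix.mul_one, mul_one, Matrix.one_mulVec, smul_smul,
      neg_smul, one_smul, neg_neg]
    abel
  conv_rhs => rw [← Matrix.fromBlocks_toBlocks (A0 x)]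
  rw [hfx, hUx, fluxMatrix]
  simp only [Matrix.fromBlocks_mulVec, Sum.elim_comp_inl, Sum.elim_comp_inr,
    Matrix.fromRows_mulVec, Matrix.fromCols_mulVec_sumElim,
    Matrix.zero_mulVec, add_zero]
  funext i
  rcases i with (j | k) | k
  · simpa only [Sum.elim_inl, Sum.elim_inr, Pi.add_apply, Pi.smul_apply] using
      congrFun key1 j
  · simpa only [Sum.elim_inl, Sum.elim_inr, Pi.add_apply, Pi.smul_apply] using
      congrFun key2 k
  · simpa only [Sum.elim_inl, Sum.elim_inr, Pi.add_apply, Pi.smul_apply] using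
      congrFun key3 k
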